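/- arXiv:2001.07325 — 2 statements merged into one kernel-verified Lean document; each statement's English description precedes it below -/
import Mathlib

section
/- For any subset S ⊆ [n] and any permutation π ∈ S_n, the dual Foata–Strehl action preserves pinnacle sets: Pin(π) = Pin(φ_S(π)). -/
/-- The extended one-line word of `w`, read 1-indexed, with the boundary
convention `π₀ = π_{n+1} = ∞`. -/
def ext (w : List ℕ) (i : ℕ) : ℕ∞ :=
  if 1 ≤ i ∧ i ≤ w.length then (w.getD (i - 1) 0 : ℕ∞) else ⊤

/-- The pinnacle set of the word `w`: values `π_i` with `π_{i-1} < π_i > π_{i+1}`. -/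
def pinnSet (w : List ℕ) : Finset ℕ :=
  ((Finset.Icc 1 w.length).filter fun i =>
      ext w (i - 1) < ext w i ∧ ext w (i + 1) < ext w i).image fun i => w.getD (i - 1) 0

/-- The vale set of the word `w`: values `π_i` with `π_{i-1} > π_i < π_{i+1}`. -/
def valeSet (w : List ℕ) : Finset ℕ :=
  ((Finset.Icc 1 w.length).filter fun i =>
      ext w i < ext w (i - 1) ∧ ext w i < ext w (i + 1)).image fun i => w.getD (i - 1) 0

/-- `w` is the one-line notation of a permutation of `[n] = {1, …, n}`. -/
def IsPermOf (n : ℕ) (w : List ℕ) : Prop := w.Perm (List.range' 1 n)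

/-- `w₁` in the `x`-factorization `w = w₁ w₂ x w₄ w₅`. -/
def fsW1 (x : ℕ) (w : List ℕ) : List ℕ :=
  ((w.take (w.idxOf x)).reverse.dropWhile fun a => decide (a < x)).reverse

/-- `w₂` in the `x`-factorization: the longest contiguous subword immediately to the
left of `x` all of whose letters are smaller than `x`. -/
def fsW2 (x : ℕ) (w : List ℕ) : List ℕ :=
  ((w.take (w.idxOf x)).reverse.takeWhile fun a => decide (a < x)).reverse

/-- `w₄` in the `x`-factorization: the longest contiguous subword immediately to the
right of `x` all of whose letters are smaller than `x`. -/
def fsW4 (x : ℕ) (w : List ℕ) : List ℕ :=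
  (w.drop (w.idxOf x + 1)).takeWhile fun a => decide (a < x)

/-- `w₅` in the `x`-factorization `w = w₁ w₂ x w₄ w₅`. -/
def fsW5 (x : ℕ) (w : List ℕ) : List ℕ :=
  (w.drop (w.idxOf x + 1)).dropWhile fun a => decide (a < x)

/-- The dual Foata–Strehl map `φ_x : w₁ w₂ x w₄ w₅ ↦ w₁ w₄ x w₂ w₅`. -/
def dualFS (x : ℕ) (w : List ℕ) : List ℕ :=
  if x ∈ w then fsW1 x w ++ fsW4 x w ++ [x] ++ fsW2 x w ++ fsW5 x w else w

/-- The dual Foata–Strehl map `φ_S` for a set `S`, i.e. the composition of the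
(commuting) maps `φ_x` over `x ∈ S`. -/
noncomputable def dualFSFinset (S : Finset ℕ) (w : List ℕ) : List ℕ :=
  S.toList.foldr dualFS w

/-- The largest letter of a word, with `wmax [] = 0`. -/
def wmax (w : List ℕ) : ℕ := w.foldr max 0

/-- The subword of `w` consisting of the letters lying in `A`. -/
def restrictTo (w : List ℕ) (A : Finset ℕ) : List ℕ :=
  w.filter fun a => decide (a ∈ A)

/-- `N_{PV}(k) = |V_k| - |P_k|` (natural subtraction). -/
def nPV (P V : Finset ℕ) (k : ℕ) : ℕ :=
  (V.filter fun v => v < k).card - (P.filter fun p => p < k).card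

/-- `N_{PV}(k) = |V_k| - |P_k|` as an integer. -/
def nPVZ (P V : Finset ℕ) (k : ℕ) : ℤ :=
  ((V.filter fun v => v < k).card : ℤ) - ((P.filter fun p => p < k).card : ℤ)

/-- `(P, V)` is admissible: some permutation of `[n]` has pinnacle set `P` and
vale set `V`. -/
def AdmissiblePair (n : ℕ) (P V : Finset ℕ) : Prop :=
  ∃ w : List ℕ, IsPermOf n w ∧ pinnSet w = P ∧ valeSet w = V

open Classical in
/-- `𝒱(P)`: the collection of all vale sets `V` for which `(P, V)` is admissible. -/
noncomputable def valeSetsOf (n : ℕ) (P : Finset ℕ) : Finset (Finset ℕ) :=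
  ((Finset.Icc 1 n).powerset).filter fun V => AdmissiblePair n P V

/-- `w` is FS-minimal: it has no double descents (with the `∞` boundary convention),
and for each pinnacle `p`, the `p`-factorization of the restriction of `w` to its
pinnacles and vales satisfies `max w₂ < max w₄`. -/
def FSMinimal (w : List ℕ) : Prop :=
  (∀ i ∈ Finset.Icc 1 w.length,
      ¬(ext w i < ext w (i - 1) ∧ ext w (i + 1) < ext w i)) ∧
  ∀ p ∈ pinnSet w,
    wmax (fsW2 p (restrictTo w (pinnSet w ∪ valeSet w))) <
      wmax (fsW4 p (restrictTo w (pinnSet w ∪ valeSet w)))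

/-- A `PV`-arrangement: a word listing each element of `P ∪ V` exactly once,
with pinnacle set `P` and vale set `V`. -/
def IsPVArrangement (P V : Finset ℕ) (α : List ℕ) : Prop :=
  α.Nodup ∧ α.toFinset = P ∪ V ∧ pinnSet α = P ∧ valeSet α = V

/-- A word is canonical (for pinnacle set `P`) if for each `p ∈ P` its
`p`-factorization satisfies `max w₂ < max w₄`. -/
def IsCanonical (P : Finset ℕ) (α : List ℕ) : Prop :=
  ∀ p ∈ P, wmax (fsW2 p α) < wmax (fsW4 p α)

/-- The number of descents of `w`: indices `j ∈ [n-1]` with `π_j > π_{j+1}`. -/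
def descentCount (w : List ℕ) : ℕ :=
  ((Finset.Icc 1 (w.length - 1)).filter fun j => w.getD j 0 < w.getD (j - 1) 0).card

/-- The original Foata–Strehl map `φ'_x`, defined like `φ_x` but with the words
`w₂, w₄` consisting of letters GREATER than `x`. -/
def origFS (x : ℕ) (w : List ℕ) : List ℕ :=
  if x ∈ w then
    ((w.take (w.idxOf x)).reverse.dropWhile fun a => decide (x < a)).reverse
      ++ ((w.drop (w.idxOf x + 1)).takeWhile fun a => decide (x < a)) ++ [x]
      ++ ((w.take (w.idxOf x)).reverse.takeWhile fun a => decide (x < a)).reverse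
      ++ ((w.drop (w.idxOf x + 1)).dropWhile fun a => decide (x < a))
  else w

/-- `C(l)`: weak compositions `(t₁, …, t_l)` of `l` with `t₁ + ⋯ + t_k ≥ k` for all `k`. -/
def weakComps (l : ℕ) : Finset (Fin l → ℕ) :=
  (Fintype.piFinset fun _ : Fin l => Finset.range (l + 1)).filter fun t =>
    (∑ i, t i) = l ∧ ∀ k : Fin l, (k : ℕ) + 1 ≤ ∑ i ∈ Finset.univ.filter (fun j => j ≤ k), t i

/-- `g_{i+1} = |G_{i+1}|`, the size of the `(i+1)`-st gap set
`G_{i+1} = {j ∈ [n] \ P : p_i < j < p_{i+1}}` (0-indexed `i`, with `p₀ = 1`). -/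
def gapCard (n : ℕ) (P : Finset ℕ) (i : ℕ) : ℕ :=
  (((Finset.Icc 1 n) \ P).filter fun j =>
      (if i = 0 then 1 else (P.sort (· ≤ ·)).getD (i - 1) 0) < j ∧
        j < (P.sort (· ≤ ·)).getD i 0).card

/-!
Whether a letter is a pinnacle depends only on its two neighbours. To make this compositional,
`pinnWith l w r` is the pinnacle set of a factor `w` read between the neighbouring values `l`
and `r` (`⊤` at the ends of the whole word).

In `w₁ w₂ x w₄ w₅` every letter of `w₂` and `w₄` is smaller than `x`, while `x` and the facing
ends of `w₁` and `w₅` (or the boundary `∞`) are larger, the letters being distinct. So the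
pinnacles inside `w₁`, `w₂`, `w₄`, `w₅` do not depend on which block sits on which side of `x`,
and `x` is a pinnacle exactly when both `w₂` and `w₄` are nonempty. Swapping `w₂` and `w₄`
therefore keeps the pinnacle set.
-/

def headOr : List ℕ → ℕ∞ → ℕ∞
  | [], r => r
  | a :: _, _ => a

def lastOr : List ℕ → ℕ∞ → ℕ∞
  | [], l => l
  | a :: t, _ => lastOr t a

def pinnWith : ℕ∞ → List ℕ → ℕ∞ → Finset ℕ
  | _, [], _ => ∅
  | l, a :: t, r => (if l < a ∧ headOr t r < a then {a} else ∅) ∪ pinnWith a t r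

section PinnWith

variable {w : List ℕ} {l l' r r' : ℕ∞} {x : ℕ}

@[simp]
lemma headOr_nil (r : ℕ∞) : headOr [] r = r := rfl

@[simp]
lemma headOr_cons (a : ℕ) (t : List ℕ) (r : ℕ∞) : headOr (a :: t) r = a := rfl

@[simp]
lemma lastOr_nil (l : ℕ∞) : lastOr [] l = l := rfl

@[simp]
lemma lastOr_cons (a : ℕ) (t : List ℕ) (l : ℕ∞) : lastOr (a :: t) l = lastOr t a := rfl

@[simp]
lemma lastOr_singleton (a : ℕ) (l : ℕ∞) : lastOr [a] l = a := rfl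

@[simp]
lemma headOr_append (u v : List ℕ) (r : ℕ∞) : headOr (u ++ v) r = headOr u (headOr v r) := by
  cases u <;> rfl

@[simp]
lemma lastOr_append (u v : List ℕ) (l : ℕ∞) : lastOr (u ++ v) l = lastOr v (lastOr u l) := by
  induction u generalizing l with
  | nil => rfl
  | cons a u ih => exact ih a

lemma headOr_of_head? {a : ℕ} (h : w.head? = some a) : headOr w r = a := by
  cases w <;> simp_all

lemma lastOr_of_getLast? {a : ℕ} (h : w.getLast? = some a) : lastOr w l = a := by
  obtain ⟨w, rfl⟩ := List.getLast?_eq_some_iff.1 h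
  simp

lemma headOr_le (hw : ∀ a ∈ w, a < x) (hr : r ≤ x) : headOr w r ≤ x := by
  cases w with
  | nil => exact hr
  | cons a t => simpa using (hw a List.mem_cons_self).le

lemma lastOr_le (hw : ∀ a ∈ w, a < x) (hl : l ≤ x) : lastOr w l ≤ x := by
  induction w generalizing l with
  | nil => exact hl
  | cons a t ih =>
    exact ih (fun b hb => hw b (List.mem_cons_of_mem a hb))
      (by exact_mod_cast (hw a List.mem_cons_self).le)

lemma headOr_lt_iff_ne_nil (hw : ∀ a ∈ w, a < x) (hr : x ≤ r) :
    headOr w r < x ↔ w ≠ [] := by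
  cases w with
  | nil => simpa using hr
  | cons a t => simpa using hw a List.mem_cons_self

lemma lastOr_lt_iff_ne_nil (hw : ∀ a ∈ w, a < x) (hl : x ≤ l) :
    lastOr w l < x ↔ w ≠ [] := by
  rcases w.eq_nil_or_concat with rfl | ⟨w, a, rfl⟩
  · simpa using hl
  · simpa using hw a (by simp)


lemma pinnWith_append (u v : List ℕ) (l r : ℕ∞) :
    pinnWith l (u ++ v) r = pinnWith l u (headOr v r) ∪ pinnWith (lastOr u l) v r := by
  induction u generalizing l with
  | nil => simp [pinnWith]
  | cons a u ih =>
    simp only [List.cons_append, pinnWith, ih, headOr_append, lastOr_cons, Finset.union_assoc]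

lemma pinnWith_singleton (l r : ℕ∞) (x : ℕ) :
    pinnWith l [x] r = if l < x ∧ r < x then {x} else ∅ := by
  rw [pinnWith, pinnWith, headOr_nil, Finset.union_empty]

lemma pinnWith_congr_left (h : ∀ a, w.head? = some a → (l < a ↔ l' < a)) :
    pinnWith l w r = pinnWith l' w r := by
  cases w with
  | nil => rfl
  | cons a t => simp only [pinnWith, h a rfl]

lemma pinnWith_congr_right (h : ∀ a, w.getLast? = some a → (r < a ↔ r' < a)) :
    pinnWith l w r = pinnWith l w r' := by
  induction w generalizing l with
  | nil => rfl
  | cons a t ih =>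
    have hhead : headOr t r < a ↔ headOr t r' < a := by
      cases t with
      | nil => exact h a rfl
      | cons b t => rfl
    have htail : pinnWith a t r = pinnWith a t r' := by
      refine ih fun c hc => h c ?_
      cases t with
      | nil => simp at hc
      | cons b t => rwa [List.getLast?_cons_cons]
    simp only [pinnWith, hhead, htail]

lemma pinnWith_eq_of_forall_lt (hw : ∀ a ∈ w, a < x) (hl : x ≤ l) (hr : x ≤ r) :
    pinnWith l w r = pinnWith x w x := by
  have hnot_lt {b : ℕ∞} (hb : x ≤ b) {a : ℕ} (ha : a ∈ w) : ¬ b < a :=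
    not_lt.2 ((Nat.cast_le.2 (hw a ha).le).trans hb)
  rw [pinnWith_congr_left fun a ha => iff_of_false (hnot_lt hl (List.mem_of_head? ha))
      (hnot_lt le_rfl (List.mem_of_head? ha)),
    pinnWith_congr_right fun a ha => iff_of_false (hnot_lt hr (List.mem_of_getLast? ha))
      (hnot_lt le_rfl (List.mem_of_getLast? ha))]

lemma pinnWith_right_eq_of_le (hr : r ≤ x) (hw : x < lastOr w l) :
    pinnWith l w r = pinnWith l w x :=
  pinnWith_congr_right fun a ha => by
    rw [lastOr_of_getLast? ha] at hw
    exact iff_of_true (hr.trans_lt hw) hw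

lemma pinnWith_left_eq_of_le (hl : l ≤ x) (hw : x < headOr w r) :
    pinnWith l w r = pinnWith x w r :=
  pinnWith_congr_left fun a ha => by
    rw [headOr_of_head? ha] at hw
    exact iff_of_true (hl.trans_lt hw) hw

theorem pinnWith_factorization {A B C D : List ℕ} (hB : ∀ a ∈ B, a < x)
    (hC : ∀ a ∈ C, a < x) (hA : x < lastOr A l) (hD : x < headOr D r) :
    pinnWith l (A ++ B ++ [x] ++ C ++ D) r =
      pinnWith l A x ∪ pinnWith x B x ∪ (if B ≠ [] ∧ C ≠ [] then {x} else ∅) ∪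
        pinnWith x C x ∪ pinnWith x D r := by
  simp only [pinnWith_append, lastOr_append, pinnWith_singleton, headOr_cons, lastOr_singleton]
  rw [pinnWith_right_eq_of_le (headOr_le hB le_rfl) hA, pinnWith_eq_of_forall_lt hB hA.le le_rfl,
    pinnWith_eq_of_forall_lt hC le_rfl hD.le, pinnWith_left_eq_of_le (lastOr_le hC le_rfl) hD]
  simp only [lastOr_lt_iff_ne_nil hB hA.le, headOr_lt_iff_ne_nil hC hD.le]

theorem pinnWith_swap {A B C D : List ℕ} (hB : ∀ a ∈ B, a < x) (hC : ∀ a ∈ C, a < x)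
    (hA : x < lastOr A l) (hD : x < headOr D r) :
    pinnWith l (A ++ B ++ [x] ++ C ++ D) r = pinnWith l (A ++ C ++ [x] ++ B ++ D) r := by
  simp only [pinnWith_factorization hB hC hA hD, pinnWith_factorization hC hB hA hD,
    show C ≠ [] ∧ B ≠ [] ↔ B ≠ [] ∧ C ≠ [] from and_comm]
  ac_rfl
lemma ext_eq_lastOr_take {w : List ℕ} {i : ℕ} (hi : i ≤ w.length) :
    ext w i = lastOr (w.take i) ⊤ := by
  cases i with
  | zero => simp [ext]
  | succ k =>
    have hk : k < w.length := hi
    rw [List.take_add_one, List.getElem?_eq_getElem hk, Option.toList_some, lastOr_append,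
      lastOr_singleton]
    simp [ext, hi, hk]

lemma ext_succ_eq_headOr_drop (w : List ℕ) (i : ℕ) : ext w (i + 1) = headOr (w.drop i) ⊤ := by
  by_cases hi : i < w.length
  · rw [List.drop_eq_getElem_cons hi, headOr_cons]
    simp [ext, hi, Nat.succ_le_of_lt hi]
  · rw [List.drop_eq_nil_of_le (not_lt.1 hi), headOr_nil, ext, if_neg (by omega)]

lemma mem_pinnWith_iff {y : ℕ} {l r : ℕ∞} {w : List ℕ} :
    y ∈ pinnWith l w r ↔ ∃ i < w.length, (lastOr (w.take i) l < headOr (w.drop i) ⊤ ∧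
      headOr (w.drop (i + 1)) r < headOr (w.drop i) ⊤) ∧ w.getD i 0 = y := by
  induction w generalizing l with
  | nil => simp [pinnWith]
  | cons a t ih =>
    rw [List.length_cons, Nat.exists_lt_succ_left]
    simp [pinnWith, ih, apply_ite (y ∈ ·), eq_comm]

lemma pinnSet_eq_pinnWith (w : List ℕ) : pinnSet w = pinnWith ⊤ w ⊤ := by
  have hcond {i : ℕ} (hi : i < w.length) :
      (ext w (i + 1 - 1) < ext w (i + 1) ∧ ext w (i + 1 + 1) < ext w (i + 1)) ↔
        (lastOr (w.take i) ⊤ < headOr (w.drop i) ⊤ ∧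
          headOr (w.drop (i + 1)) ⊤ < headOr (w.drop i) ⊤) := by
    rw [Nat.add_sub_cancel, ext_eq_lastOr_take hi.le, ext_succ_eq_headOr_drop,
      ext_succ_eq_headOr_drop]
  ext y
  simp only [pinnSet, mem_pinnWith_iff, Finset.mem_image, Finset.mem_filter, Finset.mem_Icc]
  constructor
  · rintro ⟨_ | i, ⟨⟨hi0, hi⟩, hpin⟩, rfl⟩
    · omega
    · exact ⟨i, hi, (hcond hi).1 hpin, rfl⟩
  · rintro ⟨i, hi, hpin, rfl⟩
    exact ⟨i + 1, ⟨⟨Nat.le_add_left 1 i, hi⟩, (hcond hi).2 hpin⟩, rfl⟩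

end PinnWith

section DualFoataStrehl

variable {x : ℕ} {w : List ℕ}

lemma fsW_factorization (h : x ∈ w) :
    w = fsW1 x w ++ fsW2 x w ++ [x] ++ fsW4 x w ++ fsW5 x w := by
  have hlt : w.idxOf x < w.length := List.idxOf_lt_length_iff.2 h
  have hleft : w.take (w.idxOf x) = fsW1 x w ++ fsW2 x w := by
    rw [fsW1, fsW2, ← List.reverse_append, List.takeWhile_append_dropWhile, List.reverse_reverse]
  have hright : w.drop (w.idxOf x + 1) = fsW4 x w ++ fsW5 x w :=
    List.takeWhile_append_dropWhile.symm
  conv_lhs => rw [← List.take_append_drop (w.idxOf x) w, List.drop_eq_getElem_cons hlt,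
    List.getElem_idxOf hlt, hleft, hright]
  simp

lemma lt_of_mem_fsW2 {a : ℕ} (ha : a ∈ fsW2 x w) : a < x := by
  rw [fsW2, List.mem_reverse] at ha
  simpa using List.mem_takeWhile_imp ha

lemma lt_of_mem_fsW4 {a : ℕ} (ha : a ∈ fsW4 x w) : a < x := by
  simpa using List.mem_takeWhile_imp ha

lemma le_of_getLast?_fsW1 {e : ℕ} (he : (fsW1 x w).getLast? = some e) : x ≤ e := by
  rw [fsW1, List.getLast?_reverse] at he
  simpa [he] using List.head?_dropWhile_not (fun a => decide (a < x)) (w.take (w.idxOf x)).reverse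

lemma le_of_head?_fsW5 {f : ℕ} (hf : (fsW5 x w).head? = some f) : x ≤ f := by
  rw [fsW5] at hf
  simpa [hf] using List.head?_dropWhile_not (fun a => decide (a < x)) (w.drop (w.idxOf x + 1))

lemma dualFS_perm (x : ℕ) (w : List ℕ) : (dualFS x w).Perm w := by
  by_cases hx : x ∈ w
  · rw [dualFS, if_pos hx]
    conv_rhs => rw [fsW_factorization hx]
    simp only [List.perm_iff_count, List.count_append]
    omega
  · rw [dualFS, if_neg hx]

lemma notMem_fsW1_and_fsW5 (hw : w.Nodup) (hx : x ∈ w) : x ∉ fsW1 x w ∧ x ∉ fsW5 x w := by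
  have hcount := List.count_eq_one_of_mem hw hx
  rw [fsW_factorization hx] at hcount
  simp only [List.count_append, List.count_singleton_self] at hcount
  exact ⟨List.count_eq_zero.1 (by omega), List.count_eq_zero.1 (by omega)⟩

lemma lt_lastOr_fsW1 (hw : w.Nodup) (hx : x ∈ w) : (x : ℕ∞) < lastOr (fsW1 x w) ⊤ := by
  cases h : (fsW1 x w).getLast? with
  | none => simp [List.getLast?_eq_none_iff.1 h]
  | some e =>
    have hne : x ≠ e := by
      rintro rfl
      exact (notMem_fsW1_and_fsW5 hw hx).1 (List.mem_of_getLast? h)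
    rw [lastOr_of_getLast? h]
    exact_mod_cast (le_of_getLast?_fsW1 h).lt_of_ne hne

lemma lt_headOr_fsW5 (hw : w.Nodup) (hx : x ∈ w) : (x : ℕ∞) < headOr (fsW5 x w) ⊤ := by
  cases h : (fsW5 x w).head? with
  | none => simp [List.head?_eq_none_iff.1 h]
  | some f =>
    have hne : x ≠ f := by
      rintro rfl
      exact (notMem_fsW1_and_fsW5 hw hx).2 (List.mem_of_head? h)
    rw [headOr_of_head? h]
    exact_mod_cast (le_of_head?_fsW5 h).lt_of_ne hne

lemma pinnSet_dualFS (x : ℕ) (hw : w.Nodup) : pinnSet (dualFS x w) = pinnSet w := by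
  by_cases hx : x ∈ w
  · rw [dualFS, if_pos hx, pinnSet_eq_pinnWith, pinnSet_eq_pinnWith]
    conv_rhs => rw [fsW_factorization hx]
    exact pinnWith_swap (fun _ => lt_of_mem_fsW4) (fun _ => lt_of_mem_fsW2)
      (lt_lastOr_fsW1 hw hx) (lt_headOr_fsW5 hw hx)
  · rw [dualFS, if_neg hx]

lemma foldr_dualFS_perm (xs w : List ℕ) : (xs.foldr dualFS w).Perm w := by
  induction xs with
  | nil => exact .refl w
  | cons x xs ih => exact (dualFS_perm x _).trans ih

lemma pinnSet_foldr_dualFS (xs : List ℕ) (hw : w.Nodup) :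
    pinnSet (xs.foldr dualFS w) = pinnSet w := by
  induction xs with
  | nil => rfl
  | cons x xs ih =>
    have hnd : (xs.foldr dualFS w).Nodup := (foldr_dualFS_perm xs w).nodup_iff.2 hw
    rw [List.foldr_cons, pinnSet_dualFS x hnd, ih]

end DualFoataStrehl

theorem pinnSet_dualFSFinset_general (n : ℕ) (S : Finset ℕ)
    (π : List ℕ) (hπ : IsPermOf n π) :
    pinnSet π = pinnSet (dualFSFinset S π) :=
  (pinnSet_foldr_dualFS S.toList (hπ.nodup_iff.2 List.nodup_range')).symm

/-- Theorem 2.3: the dual Foata–Strehl action preserves pinnacle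
sets: `Pin(π) = Pin(φ_S(π))` for every `S ⊆ [n]` and `π ∈ S_n`. -/
theorem pinnSet_dualFSFinset (n : ℕ) (S : Finset ℕ) (hS : S ⊆ Finset.Icc 1 n)
    (π : List ℕ) (hπ : IsPermOf n π) :
    pinnSet π = pinnSet (dualFSFinset S π) :=
  pinnSet_dualFSFinset_general n S π hπ
end

section
/- If π ∈ S_n has pinnacle set P = {p_1 < p_2 < ⋯ < p_ℓ} and vale set V = {v_1 < v_2 < ⋯ < v_{ℓ+1}}, then v_{i+1} < p_i for every i ∈ {1, 2, …, ℓ}. -/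
/-!
Between two pinnacles, and between a boundary `∞` and the nearest pinnacle, the minimum of the
word is attained at a vale. Hence sending each pinnacle `≤ p` to the first vale after it that
lies below it is injective, and the vale before the leftmost pinnacle `≤ p` is not hit: there
are more vales below `p` than pinnacles `≤ p`. For `p = p_i` this gives at least `i + 1` vales
below `p_i`.
-/

namespace Finset

variable {α : Type*} [LinearOrder α]

theorem card_filter_le_sort_getElem (s : Finset α) {k : ℕ} (hk : k < s.card) :
    #{x ∈ s | x ≤ (s.sort (· ≤ ·))[k]'(by rwa [length_sort])} = k + 1 := by
  have hk' : k < (s.sort (· ≤ ·)).length := by rwa [length_sort]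
  set e := s.orderEmbOfFin rfl
  have hfilter : {x ∈ s | x ≤ e ⟨k, hk⟩} = (Iic ⟨k, hk⟩).map e.toEmbedding := by
    ext x
    simp only [mem_filter, mem_map, mem_Iic, RelEmbedding.coe_toEmbedding]
    constructor
    · rintro ⟨hx, hle⟩
      obtain ⟨i, rfl⟩ : x ∈ Set.range e := by rwa [range_orderEmbOfFin]
      exact ⟨i, e.le_iff_le.mp hle, rfl⟩
    · rintro ⟨i, hi, rfl⟩
      exact ⟨orderEmbOfFin_mem _ _ _, e.le_iff_le.mpr hi⟩
  rw [show (s.sort (· ≤ ·))[k] = e ⟨k, hk⟩ from rfl, hfilter, card_map, Fin.card_Iic]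

theorem sort_getD_lt_of_lt_card_filter (s : Finset α) {k : ℕ} {v : α} (d : α)
    (h : k < #{x ∈ s | x < v}) : (s.sort (· ≤ ·)).getD k d < v := by
  have hk : k < s.card := h.trans_le (card_le_card (filter_subset _ _))
  have hk' : k < (s.sort (· ≤ ·)).length := by rwa [length_sort]
  rw [List.getD_eq_getElem _ _ hk']
  by_contra! hvu
  have hsub : {x ∈ s | x < v} ⊂ {x ∈ s | x ≤ (s.sort (· ≤ ·))[k]} := by
    refine (ssubset_iff_of_subset fun x hx => ?_).mpr
      ⟨(s.sort (· ≤ ·))[k], ?_, fun hu => ?_⟩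
    · rw [mem_filter] at hx ⊢
      exact ⟨hx.1, hx.2.le.trans hvu⟩
    · exact mem_filter.mpr ⟨mem_sort _ |>.mp (List.getElem_mem _), le_rfl⟩
    · exact (mem_filter.mp hu).2.not_ge hvu
  have := card_lt_card hsub
  rw [card_filter_le_sort_getElem s hk] at this
  omega

end Finset

section Word

open scoped Finset

variable {w : List ℕ} {i j a b : ℕ}

def IsPinnacleAt (w : List ℕ) (i : ℕ) : Prop :=
  ext w (i - 1) < ext w i ∧ ext w (i + 1) < ext w i

def IsValeAt (w : List ℕ) (i : ℕ) : Prop :=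
  ext w i < ext w (i - 1) ∧ ext w i < ext w (i + 1)

instance (w : List ℕ) : DecidablePred (IsPinnacleAt w) :=
  fun _ => inferInstanceAs (Decidable (_ ∧ _))

instance (w : List ℕ) : DecidablePred (IsValeAt w) :=
  fun _ => inferInstanceAs (Decidable (_ ∧ _))

theorem pinnSet_eq : pinnSet w =
    {i ∈ Finset.Icc 1 w.length | IsPinnacleAt w i}.image fun i => w.getD (i - 1) 0 := rfl

theorem valeSet_eq : valeSet w =
    {i ∈ Finset.Icc 1 w.length | IsValeAt w i}.image fun i => w.getD (i - 1) 0 := rfl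

theorem ext_lt_top_iff : ext w i < ⊤ ↔ i ∈ Finset.Icc 1 w.length := by
  rw [Finset.mem_Icc, ext]
  split_ifs with h <;> simp [h]

theorem ext_of_mem_Icc (h : i ∈ Finset.Icc 1 w.length) : ext w i = w.getD (i - 1) 0 :=
  if_pos (Finset.mem_Icc.mp h)

theorem ext_zero : ext w 0 = ⊤ := by
  simp [ext]

theorem ext_length_add_one : ext w (w.length + 1) = ⊤ := by
  simp [ext]

theorem getD_pred_injOn (hw : w.Nodup) :
    Set.InjOn (fun i => w.getD (i - 1) 0) (Finset.Icc 1 w.length) := by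
  intro i hi j hj h
  simp only [Finset.coe_Icc, Set.mem_Icc] at hi hj h
  rw [List.getD_eq_getElem _ _ (by omega), List.getD_eq_getElem _ _ (by omega)] at h
  have := hw.getElem_inj_iff.mp h
  omega

theorem ext_inj_of_lt_top (hw : w.Nodup) (hi : ext w i < ⊤) (h : ext w i = ext w j) :
    i = j := by
  have hj : ext w j < ⊤ := h ▸ hi
  rw [ext_lt_top_iff] at hi hj
  rw [ext_of_mem_Icc hi, ext_of_mem_Icc hj, Nat.cast_inj] at h
  exact getD_pred_injOn hw hi hj h

theorem IsPinnacleAt.mem_Icc (h : IsPinnacleAt w i) : i ∈ Finset.Icc 1 w.length := by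
  have h₁ := ext_lt_top_iff.mp (h.1.trans_le le_top)
  have h₂ := ext_lt_top_iff.mp (h.2.trans_le le_top)
  simp only [Finset.mem_Icc] at h₁ h₂ ⊢
  omega

theorem IsValeAt.mem_Icc (h : IsValeAt w i) : i ∈ Finset.Icc 1 w.length :=
  ext_lt_top_iff.mp (h.1.trans_le le_top)

theorem exists_isValeAt_between (hw : w.Nodup) (hab : a < b) (ha : ext w (a + 1) < ext w a)
    (hb : ext w (b - 1) < ext w b) :
    ∃ m, a < m ∧ m < b ∧ IsValeAt w m ∧ ext w m < ext w a ∧ ext w m < ext w b := by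
  obtain ⟨m, hm, hmin⟩ := (Finset.Icc a b).exists_min_image (ext w) ⟨a, by simp; omega⟩
  have hmin' : ∀ k, a ≤ k → k ≤ b → ext w m ≤ ext w k := fun k h₁ h₂ =>
    hmin k (Finset.mem_Icc.mpr ⟨h₁, h₂⟩)
  have ham : a ≠ m := by
    rintro rfl
    exact (hmin' (a + 1) (by omega) (by omega)).not_gt ha
  have hmb : m ≠ b := by
    rintro rfl
    exact (hmin' (m - 1) (by omega) (by omega)).not_gt hb
  rw [Finset.mem_Icc] at hm
  have hma : ext w m < ext w a := (hmin' (a + 1) (by omega) (by omega)).trans_lt ha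
  have hne : ∀ k, k ≠ m → ext w m ≠ ext w k := fun k hk h =>
    hk (ext_inj_of_lt_top hw (hma.trans_le le_top) h).symm
  refine ⟨m, by omega, by omega, ⟨?_, ?_⟩, hma,
    (hmin' (b - 1) (by omega) (by omega)).trans_lt hb⟩
  · exact (hmin' (m - 1) (by omega) (by omega)).lt_of_ne (hne _ (by omega))
  · exact (hmin' (m + 1) (by omega) (by omega)).lt_of_ne (hne _ (by omega))

theorem exists_isValeAt_after (hw : w.Nodup) (hi : IsPinnacleAt w i) :
    ∃ m, i < m ∧ IsValeAt w m ∧ ext w m < ext w i := by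
  have hi' := Finset.mem_Icc.mp hi.mem_Icc
  have hlast : ext w w.length < ext w (w.length + 1) := by
    rw [ext_length_add_one]
    exact ext_lt_top_iff.mpr (by simp; omega)
  obtain ⟨m, him, -, hm, hmi, -⟩ := exists_isValeAt_between hw (by omega) hi.2 hlast
  exact ⟨m, him, hm, hmi⟩

open Classical in
noncomputable def valeAfter (w : List ℕ) (i : ℕ) : ℕ :=
  if h : ∃ m, i < m ∧ IsValeAt w m ∧ ext w m < ext w i then Nat.find h else 0

theorem valeAfter_spec (hw : w.Nodup) (hi : IsPinnacleAt w i) :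
    i < valeAfter w i ∧ IsValeAt w (valeAfter w i) ∧ ext w (valeAfter w i) < ext w i := by
  rw [valeAfter, dif_pos (exists_isValeAt_after hw hi)]
  exact Nat.find_spec (exists_isValeAt_after hw hi)

theorem valeAfter_lt (hw : w.Nodup) (hi : IsPinnacleAt w i) (hj : IsPinnacleAt w j)
    (hij : i < j) : valeAfter w i < j := by
  obtain ⟨m, him, hmj, hm, hmi, -⟩ := exists_isValeAt_between hw hij hi.2 hj.1
  rw [valeAfter, dif_pos ⟨m, him, hm, hmi⟩]
  exact (Nat.find_min' _ ⟨him, hm, hmi⟩).trans_lt hmj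

theorem valeAfter_strictMonoOn (hw : w.Nodup) :
    StrictMonoOn (valeAfter w) {i | IsPinnacleAt w i} := fun _ hi _ hj hij =>
  (valeAfter_lt hw hi hj hij).trans (valeAfter_spec hw hj).1

theorem card_isPinnacleAt_le_lt_card_isValeAt_lt (hw : w.Nodup) (c : ℕ∞)
    (hne : {i ∈ Finset.Icc 1 w.length | IsPinnacleAt w i ∧ ext w i ≤ c}.Nonempty) :
    #{i ∈ Finset.Icc 1 w.length | IsPinnacleAt w i ∧ ext w i ≤ c} <
      #{i ∈ Finset.Icc 1 w.length | IsValeAt w i ∧ ext w i < c} := by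
  set P := {i ∈ Finset.Icc 1 w.length | IsPinnacleAt w i ∧ ext w i ≤ c}
  set V := {i ∈ Finset.Icc 1 w.length | IsValeAt w i ∧ ext w i < c}
  have hP : ∀ i ∈ P, IsPinnacleAt w i ∧ ext w i ≤ c := fun _ hi => (Finset.mem_filter.mp hi).2
  have hV : ∀ m, IsValeAt w m → ext w m < c → m ∈ V := fun m hm hmc =>
    Finset.mem_filter.mpr ⟨hm.mem_Icc, hm, hmc⟩
  set i₀ := P.min' hne
  obtain ⟨hi₀, hi₀c⟩ := hP i₀ (P.min'_mem hne)
  have hfirst : ext w 1 < ext w 0 := by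
    have := Finset.mem_Icc.mp hi₀.mem_Icc
    rw [ext_zero]
    exact ext_lt_top_iff.mpr (by simp; omega)
  obtain ⟨m₀, -, hm₀i₀, hm₀, -, hm₀c⟩ :=
    exists_isValeAt_between hw (Finset.mem_Icc.mp hi₀.mem_Icc).1 hfirst hi₀.1
  have hm₀V : m₀ ∈ V := hV m₀ hm₀ (hm₀c.trans_le hi₀c)
  have himage : P.image (valeAfter w) ⊆ V := by
    refine Finset.image_subset_iff.mpr fun i hi => ?_
    obtain ⟨-, hm, hmi⟩ := valeAfter_spec hw (hP i hi).1
    exact hV _ hm (hmi.trans_le (hP i hi).2)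
  have hm₀_notMem : m₀ ∉ P.image (valeAfter w) := by
    simp only [Finset.mem_image, not_exists, not_and]
    intro i hi h
    have := (valeAfter_spec hw (hP i hi).1).1
    have := P.min'_le i hi
    omega
  calc #P < #(insert m₀ (P.image (valeAfter w))) := by
        rw [Finset.card_insert_of_notMem hm₀_notMem,
          Finset.card_image_of_injOn
            ((valeAfter_strictMonoOn hw).injOn.mono fun i hi => (hP i hi).1)]
        omega
    _ ≤ #V := Finset.card_le_card (Finset.insert_subset hm₀V himage)

theorem card_filter_image_getD (hw : w.Nodup) {T : Finset ℕ} (hT : T ⊆ Finset.Icc 1 w.length)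
    (q : ℕ → Prop) [DecidablePred q] :
    #{x ∈ T.image fun i => w.getD (i - 1) 0 | q x} = #{i ∈ T | q (w.getD (i - 1) 0)} := by
  rw [Finset.filter_image, Finset.card_image_of_injOn
    ((getD_pred_injOn hw).mono (Finset.coe_subset.mpr ((Finset.filter_subset _ _).trans hT)))]

theorem card_pinnSet_le_lt_card_valeSet_lt (hw : w.Nodup) {p : ℕ} (hp : p ∈ pinnSet w) :
    #{x ∈ pinnSet w | x ≤ p} < #{x ∈ valeSet w | x < p} := by
  obtain ⟨i, hi, rfl⟩ := Finset.mem_image.mp hp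
  rw [pinnSet_eq, valeSet_eq, card_filter_image_getD hw (Finset.filter_subset _ _),
    card_filter_image_getD hw (Finset.filter_subset _ _), Finset.filter_filter,
    Finset.filter_filter]
  convert card_isPinnacleAt_le_lt_card_isValeAt_lt hw (w.getD (i - 1) 0) ⟨i, ?_⟩ using 2
  · refine Finset.filter_congr fun k hk => ?_
    rw [ext_of_mem_Icc hk, Nat.cast_le]
  · refine Finset.filter_congr fun k hk => ?_
    rw [ext_of_mem_Icc hk, Nat.cast_lt]
  · rw [Finset.mem_filter] at hi ⊢
    exact ⟨hi.1, hi.2, (ext_of_mem_Icc hi.1).le⟩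

end Word

/-- Lemma 4.2(d): if `π ∈ S_n` has pinnacle set
`P = {p₁ < ⋯ < p_ℓ}` and vale set `V = {v₁ < ⋯ < v_{ℓ+1}}`, then `v_{i+1} < p_i`
for all `i ∈ [ℓ]` (0-indexed: the `(j+1)`-st entry of the sorted vale list is smaller
than the `j`-th entry of the sorted pinnacle list). -/
theorem vale_lt_pinnacle (n : ℕ) (π : List ℕ) (hπ : IsPermOf n π) :
    ∀ j < (pinnSet π).card,
      ((valeSet π).sort (· ≤ ·)).getD (j + 1) 0 <
        ((pinnSet π).sort (· ≤ ·)).getD j 0 := by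
  have hw : π.Nodup := hπ.nodup_iff.mpr List.nodup_range'
  intro j hj
  have hjlen : j < ((pinnSet π).sort (· ≤ ·)).length := by rwa [Finset.length_sort]
  rw [List.getD_eq_getElem _ _ hjlen]
  apply Finset.sort_getD_lt_of_lt_card_filter
  rw [← Finset.card_filter_le_sort_getElem _ hj]
  exact card_pinnSet_le_lt_card_valeSet_lt hw (Finset.mem_sort _ |>.mp (List.getElem_mem _))
end
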